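/- Let λ > 0 and k ≥ 1, and suppose f ∈ C^∞((0,∞)) satisfies c^λ_j(f)(x) ≥ 0 for all x > 0 and j = 0,…,k. Then (x^{λ-1+k} f(x))^{(j)} ≥ 0 for all x > 0 and all j = 0,…,k. -/

import Mathlib

open Real Set

private lemma uD : UniqueDiffOn ℝ (Set.Ioi (0:ℝ)) := (isOpen_Ioi).uniqueDiffOn

private lemma iter_mul_id (g : ℝ → ℝ) (hg : ContDiffOn ℝ (⊤ : ℕ∞) g (Set.Ioi 0)) :
    ∀ j : ℕ, ∀ x ∈ Set.Ioi (0:ℝ),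
      iteratedDerivWithin (j+1) (fun t => t * g t) (Set.Ioi 0) x
        = x * iteratedDerivWithin (j+1) g (Set.Ioi 0) x
          + (j+1) * iteratedDerivWithin j g (Set.Ioi 0) x := by
  have hdiff : ∀ m : ℕ, DifferentiableOn ℝ (iteratedDerivWithin m g (Set.Ioi 0)) (Set.Ioi 0) :=
    fun m => hg.differentiableOn_iteratedDerivWithin (WithTop.coe_lt_coe.mpr (ENat.natCast_lt_top m)) uD
  have hid : ∀ x : ℝ, DifferentiableWithinAt ℝ (fun y : ℝ => y) (Set.Ioi 0) x :=
    fun x => differentiableWithinAt_id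
  intro j
  induction j with
  | zero =>
    intro x hx
    have hgd : DifferentiableWithinAt ℝ g (Set.Ioi 0) x :=
      (hg.differentiableOn (by simp)) x hx
    rw [iteratedDerivWithin_one, iteratedDerivWithin_zero,
      iteratedDerivWithin_one,
      derivWithin_fun_mul (hid x) hgd]
    have did : derivWithin (fun y : ℝ => y) (Set.Ioi 0) x = 1 := derivWithin_id x _ (uD x hx)
    rw [did]; push_cast; ring
  | succ j ih =>
    intro x hx
    rw [iteratedDerivWithin_succ]
    have hcong : derivWithin (iteratedDerivWithin (j+1) (fun t => t * g t) (Set.Ioi 0))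
        (Set.Ioi 0) x
        = derivWithin (fun y => y * iteratedDerivWithin (j+1) g (Set.Ioi 0) y
            + (j+1) * iteratedDerivWithin j g (Set.Ioi 0) y) (Set.Ioi 0) x := by
      apply derivWithin_congr
      · intro y hy; exact ih y hy
      · exact ih x hx
    rw [hcong]
    have d1 : DifferentiableWithinAt ℝ
        (fun y => y * iteratedDerivWithin (j+1) g (Set.Ioi 0) y) (Set.Ioi 0) x :=
      differentiableWithinAt_id.mul (hdiff (j+1) x hx)
    have d2 : DifferentiableWithinAt ℝ
        (fun y => ((j:ℝ)+1) * iteratedDerivWithin j g (Set.Ioi 0) y) (Set.Ioi 0) x :=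
      (hdiff j x hx).const_mul _
    rw [derivWithin_fun_add d1 d2,
      derivWithin_fun_mul (hid x) (hdiff (j+1) x hx),
      derivWithin_const_mul _ (hdiff j x hx)]
    have did : derivWithin (fun y : ℝ => y) (Set.Ioi 0) x = 1 := by
      exact derivWithin_id x (Set.Ioi 0) (uD x hx)
    rw [did]
    have e1 : derivWithin (iteratedDerivWithin (j+1) g (Set.Ioi 0)) (Set.Ioi 0) x
        = iteratedDerivWithin (j+2) g (Set.Ioi 0) x :=
      (congrFun iteratedDerivWithin_succ x).symm
    have e2 : derivWithin (iteratedDerivWithin j g (Set.Ioi 0)) (Set.Ioi 0) x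
        = iteratedDerivWithin (j+1) g (Set.Ioi 0) x :=
      (congrFun iteratedDerivWithin_succ x).symm
    rw [e1, e2]; push_cast; ring

theorem deriv_nonneg_of_c_nonneg (lam : ℝ) (hlam : 0 < lam) (f : ℝ → ℝ)
    (hf : ContDiffOn ℝ (⊤ : ℕ∞) f (Set.Ioi 0)) (k : ℕ) (hk : 1 ≤ k)
    (h : ∀ j, j ≤ k → ∀ x : ℝ, 0 < x →
      0 ≤ x ^ (1 - lam) *
          iteratedDerivWithin j (fun t => t ^ (lam - 1 + (j : ℝ)) * f t) (Set.Ioi 0) x) :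
    ∀ j, j ≤ k → ∀ x : ℝ, 0 < x →
      0 ≤ iteratedDerivWithin j (fun t => t ^ (lam - 1 + (k : ℝ)) * f t) (Set.Ioi 0) x := by
  -- smoothness of g m
  have hg : ∀ m : ℕ, ContDiffOn ℝ (⊤ : ℕ∞) (fun t => t ^ (lam - 1 + (m:ℝ)) * f t) (Set.Ioi 0) := by
    intro m
    have h1 : ContDiffOn ℝ (⊤ : ℕ∞) (fun t : ℝ => t ^ (lam - 1 + (m:ℝ))) (Set.Ioi 0) :=
      fun x hx => (Real.contDiffAt_rpow_const_of_ne (ne_of_gt hx)).contDiffWithinAt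
    exact h1.mul hf
  -- hypothesis reformulated
  have h' : ∀ j, j ≤ k → ∀ x : ℝ, 0 < x →
      0 ≤ iteratedDerivWithin j (fun t => t ^ (lam - 1 + (j:ℝ)) * f t) (Set.Ioi 0) x := by
    intro j hj x hx
    have := h j hj x hx
    have hp : 0 < x ^ (1 - lam) := Real.rpow_pos_of_pos hx _
    nlinarith
  -- main induction
  have main : ∀ m, m ≤ k → ∀ j, j ≤ m → ∀ x : ℝ, 0 < x →
      0 ≤ iteratedDerivWithin j (fun t => t ^ (lam - 1 + (m:ℝ)) * f t) (Set.Ioi 0) x := by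
    intro m
    induction m with
    | zero =>
      intro _ j hj x hx
      interval_cases j
      exact h' 0 (Nat.zero_le k) x hx
    | succ m ih =>
      intro hm j hj x hx
      rcases Nat.lt_or_ge j (m+1) with hjm | hjm
      · -- j ≤ m : use product formula
        have heq : Set.EqOn (fun t : ℝ => t ^ (lam - 1 + ((m:ℝ)+1)) * f t)
            (fun t : ℝ => t * (t ^ (lam - 1 + (m:ℝ)) * f t)) (Set.Ioi 0) := by
          intro t ht
          have : t ^ (lam - 1 + ((m:ℝ)+1)) = t * t ^ (lam - 1 + (m:ℝ)) := by
            rw [show lam - 1 + ((m:ℝ)+1) = (lam - 1 + (m:ℝ)) + 1 by ring,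
              Real.rpow_add ht, Real.rpow_one]; ring
          simp only [this]; ring
        have hxI : x ∈ Set.Ioi (0:ℝ) := hx
        have hcast : (lam - 1 + ((m+1:ℕ):ℝ)) = lam - 1 + ((m:ℝ)+1) := by push_cast; ring
        rw [show (fun t : ℝ => t ^ (lam - 1 + ((m+1:ℕ):ℝ)) * f t)
            = (fun t : ℝ => t ^ (lam - 1 + ((m:ℝ)+1)) * f t) by simp [hcast]]
        rw [iteratedDerivWithin_congr heq hxI]
        cases j with
        | zero =>
          rw [iteratedDerivWithin_zero]
          have h0 := ih (le_of_lt (Nat.lt_of_succ_le hm)) 0 (Nat.zero_le m) x hx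
          rw [iteratedDerivWithin_zero] at h0
          positivity
        | succ i =>
          rw [iter_mul_id _ (hg m) i x hxI]
          have h1 := ih (le_of_lt (Nat.lt_of_succ_le hm)) (i+1) (Nat.lt_succ_iff.mp hjm) x hx
          have h2 := ih (le_of_lt (Nat.lt_of_succ_le hm)) i
            (le_trans (Nat.le_succ i) (Nat.lt_succ_iff.mp hjm)) x hx
          positivity
      · -- j = m+1 : directly from hypothesis
        have hje : j = m + 1 := le_antisymm hj hjm
        subst hje
        exact h' (m+1) hm x hx
  exact fun j hj x hx => main k le_rfl j hj x hx
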